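/- Let A be a congruence-distributive algebra which is local (i.e., A has exactly one maximal congruence μ) and such that every congruence of A other than ∇_A is included in μ. Then A has the FCLP and the CBLP. -/

import Mathlib

/-! Universal-algebra framework: algebras over a signature, congruences,
factor congruences, lifting properties. -/

structure Signature where
  ops : Type
  arity : ops → ℕ

structure Alg (σ : Signature) where
  carrier : Type
  interp : ∀ f : σ.ops, (Fin (σ.arity f) → carrier) → carrier

namespace Alg

variable {σ : Signature}

/-- A congruence: an equivalence relation compatible with all operations. -/
def IsCon (A : Alg σ) (r : A.carrier → A.carrier → Prop) : Prop :=
  Equivalence r ∧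
    ∀ (f : σ.ops) (x y : Fin (σ.arity f) → A.carrier),
      (∀ i, r (x i) (y i)) → r (A.interp f x) (A.interp f y)

/-- The least congruence `Δ_A`. -/
def delta (A : Alg σ) : A.carrier → A.carrier → Prop := fun a b => a = b

/-- The greatest congruence `∇_A = A²`. -/
def nabla (A : Alg σ) : A.carrier → A.carrier → Prop := fun _ _ => True

/-- Meet (intersection) of congruences. -/
def conMeet (A : Alg σ) (r s : A.carrier → A.carrier → Prop) :
    A.carrier → A.carrier → Prop := fun a b => r a b ∧ s a b

/-- Join of congruences: the least congruence containing both. -/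
def conJoin (A : Alg σ) (r s : A.carrier → A.carrier → Prop) :
    A.carrier → A.carrier → Prop := fun a b =>
  ∀ t, A.IsCon t → (∀ x y, r x y → t x y) → (∀ x y, s x y → t x y) → t a b

/-- The congruence generated by a set of pairs. -/
def conGen (A : Alg σ) (X : Set (A.carrier × A.carrier)) :
    A.carrier → A.carrier → Prop := fun a b =>
  ∀ t, A.IsCon t → (∀ p ∈ X, t p.1 p.2) → t a b

/-- Composition of relations: `(a,b) ∈ comp r s` iff `(a,x) ∈ s` and `(x,b) ∈ r`
for some `x`. -/
def comp (A : Alg σ) (r s : A.carrier → A.carrier → Prop) :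
    A.carrier → A.carrier → Prop := fun a b => ∃ x, s a x ∧ r x b

/-- Factor congruences: congruences `φ` having a congruence `φ*` with
`φ ∨ φ* = ∇`, `φ ∩ φ* = Δ` and `φ ∘ φ* = φ* ∘ φ`. -/
def IsFC (A : Alg σ) (φ : A.carrier → A.carrier → Prop) : Prop :=
  A.IsCon φ ∧ ∃ ψ, A.IsCon ψ ∧ A.conJoin φ ψ = A.nabla ∧
    A.conMeet φ ψ = A.delta ∧ A.comp φ ψ = A.comp ψ φ

/-- Boolean congruences: complemented elements of the lattice `Con(A)`. -/
def IsBooleanCon (A : Alg σ) (φ : A.carrier → A.carrier → Prop) : Prop :=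
  A.IsCon φ ∧ ∃ ψ, A.IsCon ψ ∧ A.conJoin φ ψ = A.nabla ∧ A.conMeet φ ψ = A.delta

/-- `A` is congruence-distributive iff the lattice `Con(A)` is distributive. -/
def CongDistrib (A : Alg σ) : Prop :=
  ∀ r s t, A.IsCon r → A.IsCon s → A.IsCon t →
    A.conMeet r (A.conJoin s t) = A.conJoin (A.conMeet r s) (A.conMeet r t)

/-- `A` is congruence-permutable iff all congruences permute under composition. -/
def CongPermutable (A : Alg σ) : Prop :=
  ∀ r s, A.IsCon r → A.IsCon s → A.comp r s = A.comp s r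

/-- Arithmetical = congruence-distributive + congruence-permutable. -/
def Arithmetical (A : Alg σ) : Prop := A.CongDistrib ∧ A.CongPermutable

/-- The quotient algebra `A/θ`. -/
noncomputable def quotAlg (A : Alg σ) (θ : A.carrier → A.carrier → Prop) :
    Alg σ where
  carrier := Quot θ
  interp f x := Quot.mk θ (A.interp f fun i => (x i).out)

/-- The image `α/θ = {(a/θ, b/θ) : (a,b) ∈ α}` of a relation in the quotient. -/
def quotRel (A : Alg σ) (θ α : A.carrier → A.carrier → Prop) :
    Quot θ → Quot θ → Prop := fun x y =>
  ∃ a b, x = Quot.mk θ a ∧ y = Quot.mk θ b ∧ α a b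

/-- `θ` has the Factor Congruence Lifting Property: the Boolean morphism
`FC(θ) : FC(A) → FC(A/θ)`, `ψ ↦ (ψ ∨ θ)/θ`, is surjective. -/
def HasFCLP (A : Alg σ) (θ : A.carrier → A.carrier → Prop) : Prop :=
  ∀ γ, (A.quotAlg θ).IsFC γ →
    ∃ ψ, A.IsFC ψ ∧ A.quotRel θ (A.conJoin ψ θ) = γ

/-- `θ` has the Congruence Boolean Lifting Property: the Boolean morphism
`B(Con(A)) → B(Con(A/θ))`, `ψ ↦ (ψ ∨ θ)/θ`, is surjective. -/
def HasCBLP (A : Alg σ) (θ : A.carrier → A.carrier → Prop) : Prop :=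
  ∀ γ, (A.quotAlg θ).IsBooleanCon γ →
    ∃ ψ, A.IsBooleanCon ψ ∧ A.quotRel θ (A.conJoin ψ θ) = γ

/-- `A` has FCLP iff every congruence of `A` has FCLP. -/
def AlgFCLP (A : Alg σ) : Prop := ∀ θ, A.IsCon θ → A.HasFCLP θ

/-- `A` has CBLP iff every congruence of `A` has CBLP. -/
def AlgCBLP (A : Alg σ) : Prop := ∀ θ, A.IsCon θ → A.HasCBLP θ

/-- FC-normality. -/
def FCNormal (A : Alg σ) : Prop :=
  ∀ φ ψ, A.IsCon φ → A.IsCon ψ → A.comp φ ψ = A.nabla →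
    ∃ α β, A.IsFC α ∧ A.IsFC β ∧ A.conMeet α β = A.delta ∧
      A.comp φ α = A.nabla ∧ A.comp ψ β = A.nabla

/-- B-normality. -/
def BNormal (A : Alg σ) : Prop :=
  ∀ φ ψ, A.IsCon φ → A.IsCon ψ → A.conJoin φ ψ = A.nabla →
    ∃ α β, A.IsBooleanCon α ∧ A.IsBooleanCon β ∧ A.conMeet α β = A.delta ∧
      A.conJoin φ α = A.nabla ∧ A.conJoin ψ β = A.nabla

/-- Isomorphism of algebras. -/
def Iso (A B : Alg σ) : Prop :=
  ∃ e : A.carrier ≃ B.carrier,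
    ∀ (f : σ.ops) (x : Fin (σ.arity f) → A.carrier),
      e (A.interp f x) = B.interp f fun i => e (x i)

/-- Direct product of a finite family of algebras. -/
def prodAlg {n : ℕ} (B : Fin n → Alg σ) : Alg σ where
  carrier := ∀ i, (B i).carrier
  interp f x := fun i => (B i).interp f fun j => x j i

/-- The product congruence `θ₁ × … × θₙ`. -/
def prodRel {n : ℕ} (B : Fin n → Alg σ)
    (θ : ∀ i, (B i).carrier → (B i).carrier → Prop) :
    (prodAlg B).carrier → (prodAlg B).carrier → Prop :=
  fun x y => ∀ i, θ i (x i) (y i)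

/-- Maximal congruences: maximal elements of `(Con(A) \ {∇}, ⊆)`. -/
def IsMaxCon (A : Alg σ) (θ : A.carrier → A.carrier → Prop) : Prop :=
  A.IsCon θ ∧ θ ≠ A.nabla ∧
    ∀ ψ, A.IsCon ψ → ψ ≠ A.nabla → (∀ a b, θ a b → ψ a b) → ψ = θ

/-- Prime congruences. -/
def IsPrimeCon (A : Alg σ) (θ : A.carrier → A.carrier → Prop) : Prop :=
  A.IsCon θ ∧ ∀ α β, A.IsCon α → A.IsCon β →
    (∀ a b, α a b → β a b → θ a b) →
    (∀ a b, α a b → θ a b) ∨ ∀ a b, β a b → θ a b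

/-! If every proper congruence lies below a proper congruence `m`, then two complementary
congruences cannot both be proper, since their join `∇` would lie below `m`. This property
passes to every proper quotient `A/θ` (with `m/θ`), so all Boolean congruences of all
quotients are `Δ` or `∇`, and these lift to `Δ_A` and `∇_A`. -/

def IsGreatestProperCon (A : Alg σ) (m : A.carrier → A.carrier → Prop) : Prop :=
  A.IsCon m ∧ m ≠ A.nabla ∧
    ∀ ψ, A.IsCon ψ → ψ ≠ A.nabla → ∀ a b, ψ a b → m a b

def HasOnlyTrivialBooleanCons (A : Alg σ) : Prop :=
  ∀ γ, A.IsBooleanCon γ → γ = A.delta ∨ γ = A.nabla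

theorem isCon_delta (A : Alg σ) : A.IsCon A.delta :=
  ⟨⟨fun _ => rfl, fun h => h.symm, fun h₁ h₂ => h₁.trans h₂⟩,
    fun _ _ _ h => congrArg _ (funext h)⟩

theorem isCon_nabla (A : Alg σ) : A.IsCon A.nabla :=
  ⟨⟨fun _ => trivial, fun _ => trivial, fun _ _ => trivial⟩, fun _ _ _ _ => trivial⟩

theorem isFC_delta (A : Alg σ) : A.IsFC A.delta := by
  refine ⟨A.isCon_delta, A.nabla, A.isCon_nabla, ?_, ?_, ?_⟩
  · funext a b
    exact propext ⟨fun _ => trivial, fun _ t _ _ hs => hs a b trivial⟩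
  · funext a b
    exact propext ⟨And.left, fun h => ⟨h, trivial⟩⟩
  · funext a b
    exact propext ⟨fun _ => ⟨a, rfl, trivial⟩, fun _ => ⟨b, trivial, rfl⟩⟩

theorem isFC_nabla (A : Alg σ) : A.IsFC A.nabla := by
  refine ⟨A.isCon_nabla, A.delta, A.isCon_delta, ?_, ?_, ?_⟩
  · funext a b
    exact propext ⟨fun _ => trivial, fun _ t _ hr _ => hr a b trivial⟩
  · funext a b
    exact propext ⟨And.right, fun h => ⟨trivial, h⟩⟩
  · funext a b
    exact propext ⟨fun _ => ⟨b, trivial, rfl⟩, fun _ => ⟨a, rfl, trivial⟩⟩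

theorem IsFC.isBooleanCon {A : Alg σ} {φ : A.carrier → A.carrier → Prop} (h : A.IsFC φ) :
    A.IsBooleanCon φ :=
  let ⟨hφ, ψ, hψ, hjoin, hmeet, _⟩ := h
  ⟨hφ, ψ, hψ, hjoin, hmeet⟩

theorem IsCon.eq_nabla_of_subsingleton {A : Alg σ} [Subsingleton A.carrier]
    {r : A.carrier → A.carrier → Prop} (hr : A.IsCon r) : r = A.nabla := by
  funext a b
  exact propext ⟨fun _ => trivial, fun _ => Subsingleton.elim a b ▸ hr.1.refl a⟩

theorem IsGreatestProperCon.hasOnlyTrivialBooleanCons {A : Alg σ}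
    {m : A.carrier → A.carrier → Prop} (hm : A.IsGreatestProperCon m) :
    A.HasOnlyTrivialBooleanCons := by
  rintro γ ⟨hγc, δ, hδc, hjoin, hmeet⟩
  by_cases hγn : γ = A.nabla
  · exact Or.inr hγn
  by_cases hδn : δ = A.nabla
  · refine Or.inl <| funext fun a => funext fun b =>
      propext ⟨fun h => ?_, fun h => h ▸ hγc.1.refl a⟩
    have hγδ : A.conMeet γ δ a b := ⟨h, hδn ▸ trivial⟩
    rwa [hmeet] at hγδ
  have hm_nabla : m = A.nabla := by
    funext a b
    have hab : A.conJoin γ δ a b := hjoin ▸ trivial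
    exact propext ⟨fun _ => trivial, fun _ =>
      hab m hm.1 (hm.2.2 γ hγc hγn) (hm.2.2 δ hδc hδn)⟩
  exact absurd hm_nabla hm.2.1

section Quotient

variable {A : Alg σ} {θ : A.carrier → A.carrier → Prop}

theorem mk_eq_mk_iff (hθ : A.IsCon θ) {a b : A.carrier} :
    Quot.mk θ a = Quot.mk θ b ↔ θ a b :=
  ⟨fun h => hθ.1.eqvGen_iff.1 (Quot.eq.1 h), Quot.sound⟩

theorem quotAlg_interp_mk (hθ : A.IsCon θ) (f : σ.ops) (x : Fin (σ.arity f) → A.carrier) :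
    (A.quotAlg θ).interp f (fun i => Quot.mk θ (x i)) = Quot.mk θ (A.interp f x) :=
  (mk_eq_mk_iff hθ).2 <| hθ.2 f _ _ fun _ => (mk_eq_mk_iff hθ).1 (Quot.out_eq _)

theorem isCon_comap_mk (hθ : A.IsCon θ) {ρ : Quot θ → Quot θ → Prop}
    (hρ : (A.quotAlg θ).IsCon ρ) : A.IsCon fun a b => ρ (Quot.mk θ a) (Quot.mk θ b) := by
  refine ⟨⟨fun _ => hρ.1.refl _, hρ.1.symm, hρ.1.trans⟩, fun f x y h => ?_⟩
  have := hρ.2 f (fun i => Quot.mk θ (x i)) (fun i => Quot.mk θ (y i)) h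
  rwa [quotAlg_interp_mk hθ, quotAlg_interp_mk hθ] at this

section Above

variable {α : A.carrier → A.carrier → Prop} (hθ : A.IsCon θ) (hα : A.IsCon α)
  (hθα : ∀ a b, θ a b → α a b)
include hθ hα hθα

theorem quotRel_mk_mk_iff {a b : A.carrier} :
    A.quotRel θ α (Quot.mk θ a) (Quot.mk θ b) ↔ α a b := by
  refine ⟨fun ⟨a', b', ha, hb, h⟩ => ?_, fun h => ⟨a, b, rfl, rfl, h⟩⟩
  have ha' := hθα _ _ ((mk_eq_mk_iff hθ).1 ha)
  have hb' := hθα _ _ ((mk_eq_mk_iff hθ).1 hb)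
  exact hα.1.trans (hα.1.trans ha' h) (hα.1.symm hb')

theorem isCon_quotRel : (A.quotAlg θ).IsCon (A.quotRel θ α) := by
  have hmk := fun a b => quotRel_mk_mk_iff hθ hα hθα (a := a) (b := b)
  refine ⟨⟨fun x => ?_, fun {x y} => ?_, fun {x y z} => ?_⟩, fun f x y h => ?_⟩
  · induction x using Quot.ind
    exact (hmk _ _).2 (hα.1.refl _)
  · induction x using Quot.ind; induction y using Quot.ind
    simpa only [hmk] using hα.1.symm
  · induction x using Quot.ind; induction y using Quot.ind; induction z using Quot.ind
    simpa only [hmk] using hα.1.trans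
  · refine (hmk _ _).2 (hα.2 f _ _ fun i => (hmk _ _).1 ?_)
    exact (congrArg₂ (A.quotRel θ α) (Quot.out_eq (x i : Quot θ))
      (Quot.out_eq (y i : Quot θ))).mpr (h i)

end Above

theorem IsGreatestProperCon.quotAlg {m : A.carrier → A.carrier → Prop}
    (hm : A.IsGreatestProperCon m) (hθ : A.IsCon θ) (hθn : θ ≠ A.nabla) :
    (A.quotAlg θ).IsGreatestProperCon (A.quotRel θ m) := by
  have hθm := hm.2.2 θ hθ hθn
  have hmk := fun a b => quotRel_mk_mk_iff hθ hm.1 hθm (a := a) (b := b)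
  refine ⟨isCon_quotRel hθ hm.1 hθm, fun h => hm.2.1 ?_, fun ρ hρ hρn x y hxy => ?_⟩
  · funext a b
    exact propext ⟨fun _ => trivial, fun _ => (hmk a b).1 (h ▸ trivial)⟩
  · have hρ' : (fun a b => ρ (Quot.mk θ a) (Quot.mk θ b)) ≠ A.nabla := fun h =>
      hρn <| funext fun x => funext fun y => propext ⟨fun _ => trivial, fun _ => by
        induction x using Quot.ind; induction y using Quot.ind
        exact (congrFun (congrFun h _) _).mpr trivial⟩
    induction x using Quot.ind; induction y using Quot.ind
    exact (hmk _ _).2 (hm.2.2 _ (isCon_comap_mk hθ hρ) hρ' _ _ hxy)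

instance subsingleton_quotAlg_nabla : Subsingleton (A.quotAlg A.nabla).carrier :=
  ⟨fun x y => by
    induction x using Quot.ind; induction y using Quot.ind
    exact Quot.sound trivial⟩

theorem IsGreatestProperCon.hasOnlyTrivialBooleanCons_quotAlg
    {m : A.carrier → A.carrier → Prop} (hm : A.IsGreatestProperCon m) (hθ : A.IsCon θ) :
    (A.quotAlg θ).HasOnlyTrivialBooleanCons := by
  by_cases hθn : θ = A.nabla
  · subst hθn
    exact fun _ hγ => Or.inr (IsCon.eq_nabla_of_subsingleton (A := A.quotAlg A.nabla) hγ.1)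
  · exact (hm.quotAlg hθ hθn).hasOnlyTrivialBooleanCons

theorem quotRel_conJoin_delta (hθ : A.IsCon θ) :
    A.quotRel θ (A.conJoin A.delta θ) = (A.quotAlg θ).delta := by
  funext x y
  induction x using Quot.ind; induction y using Quot.ind
  refine propext ⟨fun ⟨a, b, ha, hb, h⟩ => ha.trans ((Quot.sound ?_).trans hb.symm),
    fun h => ?_⟩
  · exact h θ hθ (fun x y hxy => hxy ▸ hθ.1.refl x) fun _ _ => id
  · exact ⟨_, _, rfl, rfl, fun t _ _ hθt => hθt _ _ ((mk_eq_mk_iff hθ).1 h)⟩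

theorem quotRel_conJoin_nabla :
    A.quotRel θ (A.conJoin A.nabla θ) = (A.quotAlg θ).nabla := by
  funext x y
  induction x using Quot.ind; induction y using Quot.ind
  exact propext ⟨fun _ => trivial,
    fun _ => ⟨_, _, rfl, rfl, fun _ _ hr _ => hr _ _ trivial⟩⟩

theorem hasFCLP_of_hasOnlyTrivialBooleanCons (hθ : A.IsCon θ)
    (h : (A.quotAlg θ).HasOnlyTrivialBooleanCons) : A.HasFCLP θ := fun γ hγ =>
  (h γ hγ.isBooleanCon).elim
    (fun hdelta => ⟨A.delta, A.isFC_delta, (quotRel_conJoin_delta hθ).trans hdelta.symm⟩)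
    (fun hnabla => ⟨A.nabla, A.isFC_nabla, quotRel_conJoin_nabla.trans hnabla.symm⟩)

theorem hasCBLP_of_hasOnlyTrivialBooleanCons (hθ : A.IsCon θ)
    (h : (A.quotAlg θ).HasOnlyTrivialBooleanCons) : A.HasCBLP θ := fun γ hγ =>
  (h γ hγ).elim
    (fun hdelta => ⟨A.delta, A.isFC_delta.isBooleanCon,
      (quotRel_conJoin_delta hθ).trans hdelta.symm⟩)
    (fun hnabla => ⟨A.nabla, A.isFC_nabla.isBooleanCon,
      quotRel_conJoin_nabla.trans hnabla.symm⟩)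

end Quotient

end Alg

theorem stmt_16_general {σ : Signature} (A : Alg σ) (μ : A.carrier → A.carrier → Prop)
    (hμ : A.IsMaxCon μ)
    (hall : ∀ ψ, A.IsCon ψ → ψ ≠ A.nabla → ∀ a b, ψ a b → μ a b) :
    A.AlgFCLP ∧ A.AlgCBLP := by
  have hμ' : A.IsGreatestProperCon μ := ⟨hμ.1, hμ.2.1, hall⟩
  exact ⟨fun θ hθ => Alg.hasFCLP_of_hasOnlyTrivialBooleanCons hθ
      (hμ'.hasOnlyTrivialBooleanCons_quotAlg hθ),
    fun θ hθ => Alg.hasCBLP_of_hasOnlyTrivialBooleanCons hθ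
      (hμ'.hasOnlyTrivialBooleanCons_quotAlg hθ)⟩

/-- A local congruence-distributive algebra whose (unique) maximal congruence
includes all proper congruences has the FCLP and the CBLP. -/
theorem stmt_16 {σ : Signature} (A : Alg σ) (hne : Nonempty A.carrier)
    (hcd : A.CongDistrib) (μ : A.carrier → A.carrier → Prop)
    (hμ : A.IsMaxCon μ) (huniq : ∀ μ', A.IsMaxCon μ' → μ' = μ)
    (hall : ∀ ψ, A.IsCon ψ → ψ ≠ A.nabla → ∀ a b, ψ a b → μ a b) :
    A.AlgFCLP ∧ A.AlgCBLP :=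
  stmt_16_general A μ hμ hall
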